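/- Let T be a well-separated tree metric, let x, y be strings of length at most n over T, and let s_r(x), s_r(y) be their r-simplifications (applied letterwise). If dtw(x, y) ≤ nr/α then dtw(s_r(x), s_r(y)) ≤ nr/α and dtw_0(s_r(x), s_r(y)) ≤ 4n/α. -/

import Mathlib

/-- `xb` is an expansion of `x`: each letter of `x` is duplicated in place a positive
number of times. -/
def IsExpansion {α : Type*} (x xb : List α) : Prop :=
  ∃ ks : List ℕ, ks.length = x.length ∧ (∀ k ∈ ks, 0 < k) ∧
    xb = (List.zipWith (fun a k => List.replicate k a) x ks).flatten

/-- `(xb, yb)` is a correspondence between `x` and `y`: a pair of equal-length expansions. -/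
def IsCorrespondence {α : Type*} (x y xb yb : List α) : Prop :=
  IsExpansion x xb ∧ IsExpansion y yb ∧ xb.length = yb.length

/-- The cost of a correspondence: summed distances of aligned letters. -/
noncomputable def corrCost {α : Type*} (δ : α → α → ℝ) (xb yb : List α) : ℝ :=
  (List.zipWith δ xb yb).sum

/-- Dynamic time warping distance with respect to a distance function `δ`. -/
noncomputable def dtw {α : Type*} (δ : α → α → ℝ) (x y : List α) : ℝ :=
  sInf {c | ∃ xb yb, IsCorrespondence x y xb yb ∧ c = corrCost δ xb yb}

/-- Generalized Hamming distance on letters. -/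
noncomputable def hamDist {α : Type*} [DecidableEq α] (a b : α) : ℝ := if a = b then 0 else 1

/-- DTW over generalized Hamming space. -/
noncomputable def dtw0 {α : Type*} [DecidableEq α] (x y : List α) : ℝ := dtw hamDist x y

/-- A well-separated tree metric: a rooted tree on Σ with positive edge weights
(`w v` is the weight of the edge from `v` to its parent) that are non-increasing
along root-to-leaf paths. -/
structure WSTree (σ : Type*) where
  root : σ
  par : σ → σ
  w : σ → ℝ
  depth : σ → ℕ
  depth_root : depth root = 0
  root_of_depth : ∀ v, depth v = 0 → v = root
  par_root : par root = root
  depth_par : ∀ v, v ≠ root → depth (par v) + 1 = depth v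
  w_pos : ∀ v, v ≠ root → 0 < w v
  w_mono : ∀ v, v ≠ root → par v ≠ root → w v ≤ w (par v)

/-- The k-th iterated ancestor of v. -/
def WSTree.anc {σ : Type*} (T : WSTree σ) (v : σ) : ℕ → σ
  | 0 => v
  | k + 1 => T.par (T.anc v k)

/-- The maximum weight among the first k edges on the path from v towards the root. -/
noncomputable def WSTree.upMax {σ : Type*} (T : WSTree σ) (v : σ) : ℕ → ℝ
  | 0 => 0
  | k + 1 => max (T.upMax v k) (T.w (T.anc v k))

/-- The well-separated tree metric distance: the maximum edge weight on the tree path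
between u and v (minimized over common ancestors through which the path may pass). -/
noncomputable def WSTree.tdist {σ : Type*} (T : WSTree σ) (u v : σ) : ℝ :=
  sInf {c | ∃ j k, T.anc u j = T.anc v k ∧ c = max (T.upMax u j) (T.upMax v k)}

/-- The number of steps up from v to its highest ancestor reachable via edges of
weight at most r/4. -/
noncomputable def WSTree.srIdx {σ : Type*} (T : WSTree σ) (r : ℝ) (v : σ) : ℕ :=
  sSup {k | k ≤ T.depth v ∧ ∀ i < k, T.w (T.anc v i) ≤ r / 4}

/-- The r-simplification on letters: the highest ancestor of v reachable from v via
edges of weight at most r/4. -/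
noncomputable def WSTree.sr {σ : Type*} (T : WSTree σ) (r : ℝ) (v : σ) : σ :=
  T.anc v (T.srIdx r v)

/-!
Letterwise, `s_r` is a contraction, `d(s_r u, s_r v) ≤ d(u, v)`: a meeting point of `u` and `v`
above both simplification points is reached from `s_r u` and `s_r v` along sub-paths, while a
meeting point strictly below one of them lies below both, because edge weights grow towards the
root, so that `s_r u = s_r v`. For the same reason `s_r u ≠ s_r v` forces `d(u, v) ≥ r / 4`.
As `s_r` acts letterwise, the correspondences of `s_r x` and `s_r y` are the images of those of
`x` and `y`, so the two letterwise bounds give `dtw(s_r x, s_r y) ≤ dtw(x, y)` and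
`(r / 4) · dtw₀(s_r x, s_r y) ≤ dtw(x, y)`.
-/

section Dtw

variable {α β : Type*}

theorem IsExpansion.map (f : α → β) {x xb : List α} (h : IsExpansion x xb) :
    IsExpansion (x.map f) (xb.map f) := by
  obtain ⟨ks, hlen, hpos, rfl⟩ := h
  refine ⟨ks, by simpa using hlen, hpos, ?_⟩
  rw [List.map_flatten, List.map_zipWith, List.zipWith_map_left]
  simp only [List.map_replicate]

theorem IsExpansion.exists_of_map {f : α → β} {x : List α} {xb' : List β}
    (h : IsExpansion (x.map f) xb') : ∃ xb, IsExpansion x xb ∧ xb.map f = xb' := by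
  obtain ⟨ks, hlen, hpos, rfl⟩ := h
  have hks : ks.length = x.length := by simpa using hlen
  refine ⟨_, ⟨ks, hks, hpos, rfl⟩, ?_⟩
  rw [List.map_flatten, List.map_zipWith, List.zipWith_map_left]
  simp only [List.map_replicate]

theorem isCorrespondence_map_iff {f : α → β} {x y : List α} {xb' yb' : List β} :
    IsCorrespondence (x.map f) (y.map f) xb' yb' ↔
      ∃ xb yb, IsCorrespondence x y xb yb ∧ xb.map f = xb' ∧ yb.map f = yb' := by
  constructor
  · rintro ⟨hx, hy, hlen⟩
    obtain ⟨xb, hxb, rfl⟩ := hx.exists_of_map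
    obtain ⟨yb, hyb, rfl⟩ := hy.exists_of_map
    exact ⟨xb, yb, ⟨hxb, hyb, by simpa using hlen⟩, rfl, rfl⟩
  · rintro ⟨xb, yb, ⟨hxb, hyb, hlen⟩, rfl, rfl⟩
    exact ⟨hxb.map f, hyb.map f, by simpa using hlen⟩

theorem corrCost_map (f : α → β) (δ : β → β → ℝ) (xb yb : List α) :
    corrCost δ (xb.map f) (yb.map f) = corrCost (fun a b => δ (f a) (f b)) xb yb := by
  rw [corrCost, corrCost, List.zipWith_map]

theorem corrCost_mono {δ₁ δ₂ : α → α → ℝ} (h : ∀ a b, δ₁ a b ≤ δ₂ a b) (xb yb : List α) :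
    corrCost δ₁ xb yb ≤ corrCost δ₂ xb yb := by
  simp only [corrCost, ← List.map_uncurry_zip_eq_zipWith]
  exact List.sum_le_sum fun p _ => h p.1 p.2

theorem corrCost_nonneg {δ : α → α → ℝ} (h : ∀ a b, 0 ≤ δ a b) (xb yb : List α) :
    0 ≤ corrCost δ xb yb := by
  simp only [corrCost, ← List.map_uncurry_zip_eq_zipWith]
  refine List.sum_nonneg fun d hd => ?_
  obtain ⟨p, -, rfl⟩ := List.mem_map.1 hd
  exact h p.1 p.2

theorem dtw_map (f : α → β) (δ : β → β → ℝ) (x y : List α) :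
    dtw δ (x.map f) (y.map f) = dtw (fun a b => δ (f a) (f b)) x y := by
  simp only [dtw, isCorrespondence_map_iff]
  congr 1
  ext c
  constructor
  · rintro ⟨_, _, ⟨xb, yb, hc, rfl, rfl⟩, rfl⟩
    exact ⟨xb, yb, hc, corrCost_map f δ xb yb⟩
  · rintro ⟨xb, yb, hc, rfl⟩
    exact ⟨_, _, ⟨xb, yb, hc, rfl, rfl⟩, (corrCost_map f δ xb yb).symm⟩

theorem dtw_mono {δ₁ δ₂ : α → α → ℝ} (h₀ : ∀ a b, 0 ≤ δ₁ a b) (h : ∀ a b, δ₁ a b ≤ δ₂ a b)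
    (x y : List α) : dtw δ₁ x y ≤ dtw δ₂ x y := by
  by_cases hne : ∃ xb yb, IsCorrespondence x y xb yb
  · obtain ⟨xb₀, yb₀, hc₀⟩ := hne
    refine le_csInf ⟨_, xb₀, yb₀, hc₀, rfl⟩ ?_
    rintro _ ⟨xb, yb, hc, rfl⟩
    have hbdd : BddBelow {c | ∃ xb yb, IsCorrespondence x y xb yb ∧ c = corrCost δ₁ xb yb} :=
      ⟨0, by rintro _ ⟨xb, yb, -, rfl⟩; exact corrCost_nonneg h₀ xb yb⟩
    exact (csInf_le hbdd ⟨xb, yb, hc, rfl⟩).trans (corrCost_mono h xb yb)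
  · -- no correspondence at all: both sides are the junk value `sInf ∅ = 0`
    simp only [not_exists] at hne
    simp [dtw, hne]

theorem dtw_const_mul {c : ℝ} (hc : 0 ≤ c) (δ : α → α → ℝ) (x y : List α) :
    dtw (fun a b => c * δ a b) x y = c * dtw δ x y := by
  rw [dtw, dtw, ← smul_eq_mul, ← Real.sInf_smul_of_nonneg hc]
  congr 1
  ext d
  simp [Set.mem_smul_set, corrCost, List.sum_zipWith_distrib_left, eq_comm]

theorem hamDist_nonneg [DecidableEq α] (a b : α) : 0 ≤ hamDist a b := by
  unfold hamDist
  split_ifs <;> norm_num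

end Dtw

namespace WSTree

variable {σ : Type*} (T : WSTree σ)

theorem anc_add (v : σ) (j k : ℕ) : T.anc v (j + k) = T.anc (T.anc v j) k := by
  induction k with
  | zero => rfl
  | succ k ih => exact congrArg T.par ih

theorem anc_root (k : ℕ) : T.anc T.root k = T.root := by
  induction k with
  | zero => rfl
  | succ k ih => exact (congrArg T.par ih).trans T.par_root

theorem depth_anc (v : σ) {k : ℕ} (h : k ≤ T.depth v) :
    T.depth (T.anc v k) = T.depth v - k := by
  induction k with
  | zero => rfl
  | succ k ih =>
    have hk := ih (by omega)
    have hne : T.anc v k ≠ T.root := fun h' => by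
      rw [h', T.depth_root] at hk
      omega
    have := T.depth_par _ hne
    change T.depth (T.par (T.anc v k)) = _
    omega

theorem anc_eq_root_iff {v : σ} {k : ℕ} : T.anc v k = T.root ↔ T.depth v ≤ k := by
  constructor
  · intro h
    by_contra! hk
    have := T.depth_anc v hk.le
    rw [h, T.depth_root] at this
    omega
  · intro h
    rw [← Nat.add_sub_cancel' h, anc_add,
      T.root_of_depth (T.anc v (T.depth v)) (by rw [T.depth_anc v le_rfl, Nat.sub_self]), anc_root]

theorem anc_min (v : σ) (k : ℕ) : T.anc v (min k (T.depth v)) = T.anc v k := by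
  rcases le_total k (T.depth v) with h | h
  · rw [min_eq_left h]
  · rw [min_eq_right h, T.anc_eq_root_iff.2 h, T.anc_eq_root_iff.2 le_rfl]

theorem upMax_nonneg (v : σ) (k : ℕ) : 0 ≤ T.upMax v k := by
  induction k with
  | zero => exact le_rfl
  | succ k ih => exact ih.trans (le_max_left _ _)

theorem upMax_le {v : σ} {k : ℕ} {c : ℝ} (hc : 0 ≤ c) (h : ∀ i < k, T.w (T.anc v i) ≤ c) :
    T.upMax v k ≤ c := by
  induction k with
  | zero => exact hc
  | succ k ih => exact max_le (ih fun i hi => h i (by omega)) (h k k.lt_succ_self)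

theorem w_anc_le_upMax (v : σ) {i k : ℕ} (h : i < k) : T.w (T.anc v i) ≤ T.upMax v k := by
  induction k with
  | zero => omega
  | succ k ih =>
    rcases Nat.lt_succ_iff_lt_or_eq.mp h with h | rfl
    · exact (ih h).trans (le_max_left _ _)
    · exact le_max_right _ _

theorem upMax_anc_le (v : σ) {j k : ℕ} (h : j ≤ k) :
    T.upMax (T.anc v j) (k - j) ≤ T.upMax v k :=
  T.upMax_le (T.upMax_nonneg v k) fun i hi => by
    rw [← anc_add]
    exact T.w_anc_le_upMax v (by omega)

theorem w_anc_mono {v : σ} {t s : ℕ} (hts : t ≤ s) (hs : T.anc v s ≠ T.root) :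
    T.w (T.anc v t) ≤ T.w (T.anc v s) := by
  induction s, hts using Nat.le_induction with
  | base => exact le_rfl
  | succ s _ ih =>
    have hs' : T.anc v s ≠ T.root := fun h => hs (by rw [anc, h, T.par_root])
    exact (ih hs').trans (T.w_mono _ hs' hs)

theorem srIdx_spec (r : ℝ) (v : σ) :
    T.srIdx r v ≤ T.depth v ∧ ∀ i < T.srIdx r v, T.w (T.anc v i) ≤ r / 4 := by
  have hbdd : BddAbove {k | k ≤ T.depth v ∧ ∀ i < k, T.w (T.anc v i) ≤ r / 4} :=
    ⟨T.depth v, fun _ hk => hk.1⟩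
  exact Nat.sSup_mem ⟨0, by simp⟩ hbdd

theorem le_srIdx {r : ℝ} {v : σ} {k : ℕ} (hk : k ≤ T.depth v)
    (h : ∀ i < k, T.w (T.anc v i) ≤ r / 4) : k ≤ T.srIdx r v := by
  have hbdd : BddAbove {k | k ≤ T.depth v ∧ ∀ i < k, T.w (T.anc v i) ≤ r / 4} :=
    ⟨T.depth v, fun _ hk => hk.1⟩
  exact le_csSup hbdd ⟨hk, h⟩

theorem srIdx_anc {r : ℝ} {v : σ} {j : ℕ} (h : j ≤ T.srIdx r v) :
    T.srIdx r (T.anc v j) = T.srIdx r v - j := by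
  obtain ⟨hdepth, hw⟩ := T.srIdx_spec r v
  have hd : T.depth (T.anc v j) = T.depth v - j := T.depth_anc v (h.trans hdepth)
  apply le_antisymm
  · obtain ⟨hdepth', hw'⟩ := T.srIdx_spec r (T.anc v j)
    suffices j + T.srIdx r (T.anc v j) ≤ T.srIdx r v by omega
    refine T.le_srIdx (by omega) fun t ht => ?_
    rcases lt_or_ge t j with htj | htj
    · exact hw t (by omega)
    · rw [← Nat.add_sub_cancel' htj, anc_add]
      exact hw' _ (by omega)
  · refine T.le_srIdx (by omega) fun t ht => ?_
    rw [← anc_add]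
    exact hw _ (by omega)

theorem sr_anc_of_le_srIdx {r : ℝ} {v : σ} {j : ℕ} (h : j ≤ T.srIdx r v) :
    T.sr r (T.anc v j) = T.sr r v := by
  rw [sr, sr, T.srIdx_anc h, ← anc_add, Nat.add_sub_cancel' h]

theorem sr_anc {r : ℝ} {v : σ} {j : ℕ} (h : ∀ i < j, T.w (T.anc v i) ≤ r / 4) :
    T.sr r (T.anc v j) = T.sr r v := by
  rw [← T.anc_min v j]
  exact T.sr_anc_of_le_srIdx
    (T.le_srIdx (min_le_right _ _) fun i hi => h i (hi.trans_le (min_le_left _ _)))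

theorem sr_eq_of_anc_eq {r : ℝ} {u v : σ} {j k : ℕ}
    (hu : ∀ i < j, T.w (T.anc u i) ≤ r / 4) (hv : ∀ i < k, T.w (T.anc v i) ≤ r / 4)
    (h : T.anc u j = T.anc v k) : T.sr r u = T.sr r v := by
  rw [← T.sr_anc hu, ← T.sr_anc hv, h]

/-- A meeting point strictly below the simplification point of `u` is also below that of `v`:
its edge weighs at most `r / 4`, and the edges of `v` below it weigh no more. -/
theorem sr_eq_of_lt_srIdx {r : ℝ} {u v : σ} {j k : ℕ} (hj : j < T.srIdx r u)
    (h : T.anc u j = T.anc v k) : T.sr r u = T.sr r v := by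
  obtain ⟨hdepth, hw⟩ := T.srIdx_spec r u
  have hne : T.anc v k ≠ T.root := by
    rw [← h, Ne, anc_eq_root_iff]
    omega
  refine T.sr_eq_of_anc_eq (fun i hi => hw i (hi.trans hj)) (fun i hi => ?_) h
  calc T.w (T.anc v i) ≤ T.w (T.anc v k) := T.w_anc_mono hi.le hne
    _ = T.w (T.anc u j) := by rw [h]
    _ ≤ r / 4 := hw j hj

theorem tdist_le {u v : σ} {j k : ℕ} (h : T.anc u j = T.anc v k) :
    T.tdist u v ≤ max (T.upMax u j) (T.upMax v k) :=
  csInf_le ⟨0, by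
    rintro _ ⟨j, k, -, rfl⟩
    exact (T.upMax_nonneg u j).trans (le_max_left _ _)⟩ ⟨j, k, h, rfl⟩

theorem le_tdist {u v : σ} {c : ℝ}
    (h : ∀ j k, T.anc u j = T.anc v k → c ≤ max (T.upMax u j) (T.upMax v k)) :
    c ≤ T.tdist u v := by
  refine le_csInf ⟨_, T.depth u, T.depth v, ?_, rfl⟩ ?_
  · rw [T.anc_eq_root_iff.2 le_rfl, T.anc_eq_root_iff.2 le_rfl]
  · rintro _ ⟨j, k, hjk, rfl⟩
    exact h j k hjk

theorem exists_anc_eq_of_tdist_lt {u v : σ} {c : ℝ} (h : T.tdist u v < c) :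
    ∃ j k, T.anc u j = T.anc v k ∧ max (T.upMax u j) (T.upMax v k) < c := by
  by_contra! hc
  exact (T.le_tdist hc).not_gt h

theorem tdist_nonneg (u v : σ) : 0 ≤ T.tdist u v :=
  T.le_tdist fun j _ _ => (T.upMax_nonneg u j).trans (le_max_left _ _)

theorem tdist_self (v : σ) : T.tdist v v = 0 :=
  le_antisymm ((T.tdist_le (j := 0) (k := 0) rfl).trans (by simp [upMax])) (T.tdist_nonneg v v)

theorem tdist_sr_le (r : ℝ) (u v : σ) : T.tdist (T.sr r u) (T.sr r v) ≤ T.tdist u v := by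
  refine T.le_tdist fun j k h => ?_
  have hupMax := (T.upMax_nonneg u j).trans (le_max_left _ (T.upMax v k))
  by_cases hu : j < T.srIdx r u
  · rw [T.sr_eq_of_lt_srIdx hu h, tdist_self]
    exact hupMax
  by_cases hv : k < T.srIdx r v
  · rw [T.sr_eq_of_lt_srIdx hv h.symm, tdist_self]
    exact hupMax
  push Not at hu hv
  calc T.tdist (T.sr r u) (T.sr r v)
      ≤ max (T.upMax (T.sr r u) (j - T.srIdx r u)) (T.upMax (T.sr r v) (k - T.srIdx r v)) :=
        T.tdist_le (by rw [sr, sr, ← anc_add, ← anc_add, Nat.add_sub_cancel' hu,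
          Nat.add_sub_cancel' hv, h])
    _ ≤ max (T.upMax u j) (T.upMax v k) := max_le_max (T.upMax_anc_le u hu) (T.upMax_anc_le v hv)

theorem sr_eq_of_tdist_lt {r : ℝ} {u v : σ} (h : T.tdist u v < r / 4) : T.sr r u = T.sr r v := by
  obtain ⟨j, k, hjk, hlt⟩ := T.exists_anc_eq_of_tdist_lt h
  exact T.sr_eq_of_anc_eq
    (fun i hi => ((T.w_anc_le_upMax u hi).trans (le_max_left _ _)).trans hlt.le)
    (fun i hi => ((T.w_anc_le_upMax v hi).trans (le_max_right _ _)).trans hlt.le) hjk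

theorem mul_hamDist_sr_le [DecidableEq σ] (r : ℝ) (u v : σ) :
    r / 4 * hamDist (T.sr r u) (T.sr r v) ≤ T.tdist u v := by
  unfold hamDist
  split_ifs with h
  · rw [mul_zero]
    exact T.tdist_nonneg u v
  · rw [mul_one]
    exact le_of_not_gt fun hlt => h (T.sr_eq_of_tdist_lt hlt)

end WSTree

theorem dtw_sr_le_general {σ : Type*} [DecidableEq σ] (T : WSTree σ) (r a : ℝ) (hr : 1 ≤ r)
    (n : ℕ) (x y : List σ) (h : dtw T.tdist x y ≤ n * r / a) :
    dtw T.tdist (x.map (T.sr r)) (y.map (T.sr r)) ≤ n * r / a ∧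
      dtw0 (x.map (T.sr r)) (y.map (T.sr r)) ≤ 4 * n / a := by
  have hr4 : 0 < r / 4 := by linarith
  have hdist : dtw T.tdist (x.map (T.sr r)) (y.map (T.sr r)) ≤ dtw T.tdist x y := by
    rw [dtw_map]
    exact dtw_mono (fun _ _ => T.tdist_nonneg _ _) (T.tdist_sr_le r) x y
  have hham : r / 4 * dtw0 (x.map (T.sr r)) (y.map (T.sr r)) ≤ dtw T.tdist x y := by
    rw [dtw0, dtw_map, ← dtw_const_mul hr4.le]
    exact dtw_mono (fun _ _ => mul_nonneg hr4.le (hamDist_nonneg _ _)) (T.mul_hamDist_sr_le r) x y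
  refine ⟨hdist.trans h, le_of_mul_le_mul_left ?_ hr4⟩
  calc r / 4 * dtw0 (x.map (T.sr r)) (y.map (T.sr r)) ≤ n * r / a := hham.trans h
    _ = r / 4 * (4 * n / a) := by ring

/-- If dtw(x, y) ≤ nr/α then dtw(s_r(x), s_r(y)) ≤ nr/α and
dtw₀(s_r(x), s_r(y)) ≤ 4n/α. -/
theorem dtw_sr_le {σ : Type*} [DecidableEq σ] (T : WSTree σ) (r a : ℝ) (hr : 1 ≤ r)
    (ha : 0 < a) (n : ℕ) (x y : List σ) (hx : x.length ≤ n) (hy : y.length ≤ n)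
    (h : dtw T.tdist x y ≤ n * r / a) :
    dtw T.tdist (x.map (T.sr r)) (y.map (T.sr r)) ≤ n * r / a ∧
      dtw0 (x.map (T.sr r)) (y.map (T.sr r)) ≤ 4 * n / a :=
  dtw_sr_le_general T r a hr n x y h
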